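/- arXiv:1502.03871 — 2 statements merged into one kernel-verified Lean document; each statement's English description precedes it below -/
import Mathlib

section
/- Let λ > 0, θ > 0, let (g_n)_{n≥1} be nonnegative reals with Σ_{n≥1} g_n = 1 such that the integral I = ∫_0^1 (1−G(u))/(1−u) du is finite, where G(z) = Σ_{n=1}^∞ g_n z^n. Let (ρ_n)_{n≥0} be a nonnegative sequence with Σ_{n≥0} ρ_n = 1 satisfying the balance equations: 0 = −λρ_0 + θρ_1, and for n ≥ 1, 0 = −(λ+nθ)ρ_n + (n+1)θ ρ_{n+1} + λ Σ_{i=1}^n g_i ρ_{n−i}. Then ρ_0 = exp( −(λ/θ) I ). -/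
/-!
Multiplying the `n`-th balance equation by `z ^ n` and summing shows that `ψ(z) = ∑ ρₙ zⁿ`
solves `θ (1 - z) ψ' = λ (1 - G) ψ` on `[0, 1)`, i.e. `(log ψ)' = (λ/θ) (1 - G(z)) / (1 - z)`.
Integrating from `0` to `z` and letting `z → 1⁻`, Abel's theorem gives `ψ(1⁻) = ∑ ρₙ = 1`, while
`ψ(0) = ρ₀`, which is positive because `ρ₀ = 0` would force every `ρₙ` to vanish.
-/

open MeasureTheory Filter Set Finset Topology

noncomputable def genFun (a : ℕ → ℝ) (z : ℝ) : ℝ := ∑' n, a n * z ^ n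

section GenFun

variable {a b : ℕ → ℝ} {z : ℝ}

lemma genFun_zero (a : ℕ → ℝ) : genFun a 0 = a 0 := by
  rw [genFun, tsum_eq_single 0 fun n hn => by simp [zero_pow hn]]
  simp

lemma summable_mul_pow_of_summable (ha : Summable a) (hz : |z| ≤ 1) :
    Summable fun n => a n * z ^ n :=
  ha.abs.of_norm_bounded fun n => by
    rw [Real.norm_eq_abs, abs_mul, abs_pow]
    exact mul_le_of_le_one_right (abs_nonneg _) (pow_le_one₀ (abs_nonneg z) hz)

lemma genFun_pos (hnn : ∀ n, 0 ≤ a n) (ha : Summable a) (h0 : 0 < a 0) (hz0 : 0 ≤ z)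
    (hz1 : z ≤ 1) : 0 < genFun a z := by
  have hle : a 0 * z ^ 0 ≤ genFun a z :=
    (summable_mul_pow_of_summable ha (by rwa [abs_of_nonneg hz0])).le_tsum 0
      fun n _ => mul_nonneg (hnn n) (pow_nonneg hz0 n)
  rw [pow_zero, mul_one] at hle
  exact h0.trans_le hle

lemma hasSum_genFun_mul (ha : Summable a) (hb : Summable b) (hz : |z| ≤ 1) :
    HasSum (fun n => (∑ i ∈ range (n + 1), a i * b (n - i)) * z ^ n)
      (genFun a z * genFun b z) := by
  have ha' := summable_norm_iff.2 (summable_mul_pow_of_summable ha hz)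
  have hb' := summable_norm_iff.2 (summable_mul_pow_of_summable hb hz)
  have hcoeff : ∀ n, ∑ i ∈ range (n + 1), a i * z ^ i * (b (n - i) * z ^ (n - i)) =
      (∑ i ∈ range (n + 1), a i * b (n - i)) * z ^ n := by
    intro n
    rw [Finset.sum_mul]
    refine Finset.sum_congr rfl fun i hi => ?_
    rw [← Nat.add_sub_cancel' (Nat.lt_succ_iff.mp (mem_range.mp hi)), pow_add]
    simp only [Nat.add_sub_cancel_left]
    ring
  have hsum := (summable_norm_sum_mul_range_of_summable_norm ha' hb').of_norm.congr hcoeff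
  rw [genFun, genFun, tsum_mul_tsum_eq_tsum_sum_range_of_summable_norm ha' hb', tsum_congr hcoeff]
  exact hsum.hasSum

lemma summable_natCast_mul_pow_pred {r : ℝ} (hr : |r| < 1) :
    Summable fun n : ℕ => (n : ℝ) * r ^ (n - 1) := by
  rw [← summable_nat_add_iff 1]
  refine ((summable_pow_mul_geometric_of_norm_lt_one 1 hr).add
    (summable_geometric_of_abs_lt_one hr)).congr fun n => ?_
  simp only [Nat.add_sub_cancel]
  push_cast
  ring

lemma norm_mul_natCast_mul_pow_pred_le (ha : Summable a) {w r : ℝ} (hw : |w| ≤ r) (n : ℕ) :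
    ‖a n * (n * w ^ (n - 1))‖ ≤ (∑' k, |a k|) * (n * r ^ (n - 1)) := by
  rw [Real.norm_eq_abs, abs_mul, abs_mul, Nat.abs_cast, abs_pow]
  gcongr
  exact ha.abs.le_tsum n fun k _ => abs_nonneg _

lemma summable_mul_natCast_mul_pow_pred (ha : Summable a) (hz : |z| < 1) :
    Summable fun n => a n * (n * z ^ (n - 1)) :=
  ((summable_natCast_mul_pow_pred (by rwa [abs_abs])).mul_left _).of_norm_bounded
    (norm_mul_natCast_mul_pow_pred_le ha le_rfl)

lemma hasDerivAt_genFun (ha : Summable a) (hz : |z| < 1) :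
    HasDerivAt (genFun a) (∑' n, a n * (n * z ^ (n - 1))) z := by
  obtain ⟨r, hzr, hr1⟩ := exists_between hz
  have hr : |r| < 1 := by rwa [abs_of_pos ((abs_nonneg z).trans_lt hzr)]
  have hzmem : z ∈ Ioo (-r) r := ⟨neg_lt_of_abs_lt hzr, lt_of_abs_lt hzr⟩
  exact hasDerivAt_tsum_of_isPreconnected (g := fun n w => a n * w ^ n)
    (g' := fun n w => a n * (n * w ^ (n - 1)))
    ((summable_natCast_mul_pow_pred hr).mul_left _) isOpen_Ioo (convex_Ioo _ _).isPreconnected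
    (fun n w _ => (hasDerivAt_pow n w).const_mul (a n))
    (fun n w hw => norm_mul_natCast_mul_pow_pred_le ha (abs_lt.2 hw).le n)
    hzmem (summable_mul_pow_of_summable ha hz.le) hzmem

end GenFun

section Balance

variable {lam th : ℝ} {g ρ : ℕ → ℝ}

lemma sum_range_succ_mul_eq_sum_Icc (hg0 : g 0 = 0) (n : ℕ) :
    ∑ i ∈ range (n + 1), g i * ρ (n - i) = ∑ i ∈ Icc 1 n, g i * ρ (n - i) := by
  rw [Finset.sum_range_succ', hg0, zero_mul, add_zero, Finset.range_eq_Ico,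
    Finset.sum_Ico_add' (fun i => g i * ρ (n - i))]
  rfl

lemma balance_recurrence (hg0 : g 0 = 0) (hbal0 : 0 = -lam * ρ 0 + th * ρ 1)
    (hbal : ∀ n : ℕ, 1 ≤ n →
      0 = -(lam + (n : ℝ) * th) * ρ n + ((n : ℝ) + 1) * th * ρ (n + 1) +
        lam * ∑ i ∈ Finset.Icc 1 n, g i * ρ (n - i)) (n : ℕ) :
    th * ((n + 1) * ρ (n + 1)) =
      lam * ρ n + th * (n * ρ n) - lam * ∑ i ∈ range (n + 1), g i * ρ (n - i) := by
  rw [sum_range_succ_mul_eq_sum_Icc hg0]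
  rcases Nat.eq_zero_or_pos n with rfl | hn
  · simp only [CharP.cast_eq_zero, zero_add, zero_mul, mul_zero, add_zero, one_mul,
      Finset.Icc_eq_empty_of_lt zero_lt_one, Finset.sum_empty, sub_zero]
    linear_combination -hbal0
  · linear_combination -hbal n hn

variable (hrec : ∀ n : ℕ, th * ((n + 1) * ρ (n + 1)) =
  lam * ρ n + th * (n * ρ n) - lam * ∑ i ∈ range (n + 1), g i * ρ (n - i))
include hrec

lemma eq_zero_of_balance_of_zero (hth : th ≠ 0) (h0 : ρ 0 = 0) (n : ℕ) : ρ n = 0 := by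
  induction n using Nat.strong_induction_on with
  | _ n ih =>
    rcases n with _ | n
    · exact h0
    have hprev : ∑ i ∈ range (n + 1), g i * ρ (n - i) = 0 :=
      Finset.sum_eq_zero fun i _ => by rw [ih (n - i) (by omega), mul_zero]
    have h := hrec n
    rw [ih n (by omega), hprev] at h
    have hsucc : th * ((n : ℝ) + 1) * ρ (n + 1) = 0 := by linear_combination h
    exact (mul_eq_zero.mp hsucc).resolve_left (mul_ne_zero hth (by positivity))

lemma genFun_ode (hg : Summable g) (hρ : Summable ρ) {z : ℝ} (hz : |z| < 1) :
    th * (1 - z) * ∑' n, ρ n * (n * z ^ (n - 1)) = lam * (1 - genFun g z) * genFun ρ z := by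
  set D := ∑' n, ρ n * (n * z ^ (n - 1))
  have hD : HasSum (fun n => ρ n * (n * z ^ (n - 1))) D :=
    (summable_mul_natCast_mul_pow_pred hρ hz).hasSum
  have hDshift : HasSum (fun n : ℕ => (n + 1) * ρ (n + 1) * z ^ n) D := by
    have h := (hasSum_nat_add_iff' 1).2 hD
    rw [Finset.sum_range_one, Nat.cast_zero, zero_mul, mul_zero, sub_zero] at h
    refine h.congr_fun fun n => ?_
    push_cast
    ring
  have hzD : HasSum (fun n : ℕ => n * ρ n * z ^ n) (z * D) := by
    refine (hD.mul_left z).congr_fun fun n => ?_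
    rcases n with _ | n
    · simp
    · simp only [Nat.add_sub_cancel, pow_succ]
      ring
  have hf : HasSum (fun n => ρ n * z ^ n) (genFun ρ z) :=
    (summable_mul_pow_of_summable hρ hz.le).hasSum
  have hGf := hasSum_genFun_mul hg hρ hz.le
  have hrhs := ((hf.mul_left lam).add (hzD.mul_left th)).sub (hGf.mul_left lam)
  have hlhs : HasSum (fun n : ℕ => lam * (ρ n * z ^ n) + th * (n * ρ n * z ^ n) -
      lam * ((∑ i ∈ range (n + 1), g i * ρ (n - i)) * z ^ n)) (th * D) :=
    (hDshift.mul_left th).congr_fun fun n => by linear_combination (-z ^ n) * hrec n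
  linear_combination hlhs.unique hrhs

lemma hasDerivAt_genFun_of_balance (hth : th ≠ 0) (hg : Summable g) (hρ : Summable ρ) {z : ℝ}
    (hz : |z| < 1) :
    HasDerivAt (genFun ρ) (lam / th * ((1 - genFun g z) / (1 - z)) * genFun ρ z) z := by
  convert hasDerivAt_genFun hρ hz using 1
  have h1z : 1 - z ≠ 0 := sub_ne_zero.mpr (lt_of_abs_lt hz).ne'
  refine mul_left_cancel₀ (mul_ne_zero hth h1z) ?_
  rw [genFun_ode hrec hg hρ hz]
  field_simp

end Balance

lemma tendsto_setIntegral_Ioc_nhdsLT {H : ℝ → ℝ} {a b : ℝ} (hab : a < b)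
    (hH : IntegrableOn H (Ioo a b)) :
    Tendsto (fun z => ∫ t in Ioc a z, H t) (𝓝[<] b) (𝓝 (∫ t in Ioo a b, H t)) := by
  have hcont := intervalIntegral.continuousOn_primitive
    ((integrableOn_Icc_iff_integrableOn_Ioo).mpr hH) b (right_mem_Icc.mpr hab.le)
  rw [← integral_Ioc_eq_integral_Ioo, ← nhdsWithin_Ioo_eq_nhdsLT hab]
  exact hcont.mono_left (nhdsWithin_mono b Ioo_subset_Icc_self)

lemma eq_exp_neg_integral_of_hasDerivAt_mul {f H : ℝ → ℝ}
    (hpos : ∀ t ∈ Ico (0 : ℝ) 1, 0 < f t)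
    (hderiv : ∀ t ∈ Ico (0 : ℝ) 1, HasDerivAt f (H t * f t) t)
    (hH : IntegrableOn H (Ioo 0 1)) (hlim : Tendsto f (𝓝[<] 1) (𝓝 1)) :
    f 0 = Real.exp (-∫ u in Ioo (0 : ℝ) 1, H u) := by
  have hlog : ∀ z ∈ Ioo (0 : ℝ) 1, Real.log (f z) = Real.log (f 0) + ∫ t in Ioc 0 z, H t := by
    intro z hz
    have hftc : ∫ t in (0 : ℝ)..z, H t = Real.log (f z) - Real.log (f 0) := by
      refine intervalIntegral.integral_eq_sub_of_hasDerivAt (f := fun w => Real.log (f w))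
        (fun t ht => ?_) ?_
      · rw [uIcc_of_le hz.1.le] at ht
        have ht' : t ∈ Ico (0 : ℝ) 1 := ⟨ht.1, ht.2.trans_lt hz.2⟩
        simpa [(hpos t ht').ne'] using (hderiv t ht').log (hpos t ht').ne'
      · exact (intervalIntegrable_iff_integrableOn_Ioc_of_le hz.1.le).mpr
          (hH.mono_set fun x hx => ⟨hx.1, hx.2.trans_lt hz.2⟩)
    rw [intervalIntegral.integral_of_le hz.1.le] at hftc
    linarith
  have hloglim : Tendsto (fun z => Real.log (f z)) (𝓝[<] 1) (𝓝 0) := by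
    simpa [Function.comp_def] using ((Real.continuousAt_log one_ne_zero).tendsto.comp hlim)
  have hsum : Real.log (f 0) + ∫ u in Ioo (0 : ℝ) 1, H u = 0 := by
    refine tendsto_nhds_unique ?_ hloglim
    refine (tendsto_const_nhds.add (tendsto_setIntegral_Ioc_nhdsLT zero_lt_one hH)).congr' ?_
    filter_upwards [Ioo_mem_nhdsLT zero_lt_one] with z hz
    exact (hlog z hz).symm
  rw [← Real.exp_log (hpos 0 ⟨le_rfl, zero_lt_one⟩)]
  congr 1
  linarith

theorem orderbook_stationary_rho_zero_general
    (lam th : ℝ) (hth : 0 < th)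
    (g : ℕ → ℝ) (hg0 : g 0 = 0) (hgsum : HasSum g 1)
    (hI : MeasureTheory.IntegrableOn
      (fun u : ℝ => (1 - ∑' n : ℕ, g n * u ^ n) / (1 - u)) (Set.Ioo 0 1))
    (ρ : ℕ → ℝ) (hρnn : ∀ n, 0 ≤ ρ n) (hρsum : HasSum ρ 1)
    (hbal0 : 0 = -lam * ρ 0 + th * ρ 1)
    (hbal : ∀ n : ℕ, 1 ≤ n →
      0 = -(lam + (n : ℝ) * th) * ρ n + ((n : ℝ) + 1) * th * ρ (n + 1) +
        lam * ∑ i ∈ Finset.Icc 1 n, g i * ρ (n - i)) :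
    ρ 0 = Real.exp (-(lam / th) *
      ∫ u in Set.Ioo (0:ℝ) 1, (1 - ∑' n : ℕ, g n * u ^ n) / (1 - u)) := by
  have hrec := balance_recurrence hg0 hbal0 hbal
  have hρ0 : 0 < ρ 0 := by
    refine (hρnn 0).lt_of_ne' fun h0 => one_ne_zero (hρsum.unique ?_)
    simp [funext (eq_zero_of_balance_of_zero hrec hth.ne' h0), hasSum_zero]
  have hode : ∀ t ∈ Ico (0 : ℝ) 1, HasDerivAt (genFun ρ)
      (lam / th * ((1 - genFun g t) / (1 - t)) * genFun ρ t) t := fun t ht =>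
    hasDerivAt_genFun_of_balance hrec hth.ne' hgsum.summable hρsum.summable
      (abs_lt.2 ⟨by linarith [ht.1], ht.2⟩)
  have habel : Tendsto (genFun ρ) (𝓝[<] 1) (𝓝 1) :=
    Real.tendsto_tsum_powerSeries_nhdsWithin_lt hρsum.tendsto_sum_nat
  have h := eq_exp_neg_integral_of_hasDerivAt_mul
    (fun t ht => genFun_pos hρnn hρsum.summable hρ0 ht.1 ht.2.le) hode (hI.const_mul _) habel
  rwa [genFun_zero, integral_const_mul, ← neg_mul] at h

/-- If the stationary distribution `(ρ_n)` of the order-book queue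
(arrival rate `λ`, order-size distribution `(g_n)_{n≥1}`, cancellation rate `θ`) is a
probability distribution and `I = ∫_0^1 (1-G(u))/(1-u) du` is finite, then
`ρ_0 = exp(-(λ/θ) I)`. -/
theorem orderbook_stationary_rho_zero
    (lam th : ℝ) (hlam : 0 < lam) (hth : 0 < th)
    (g : ℕ → ℝ) (hg0 : g 0 = 0) (hgnn : ∀ n, 0 ≤ g n) (hgsum : HasSum g 1)
    (hI : MeasureTheory.IntegrableOn
      (fun u : ℝ => (1 - ∑' n : ℕ, g n * u ^ n) / (1 - u)) (Set.Ioo 0 1))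
    (ρ : ℕ → ℝ) (hρnn : ∀ n, 0 ≤ ρ n) (hρsum : HasSum ρ 1)
    (hbal0 : 0 = -lam * ρ 0 + th * ρ 1)
    (hbal : ∀ n : ℕ, 1 ≤ n →
      0 = -(lam + (n : ℝ) * th) * ρ n + ((n : ℝ) + 1) * th * ρ (n + 1) +
        lam * ∑ i ∈ Finset.Icc 1 n, g i * ρ (n - i)) :
    ρ 0 = Real.exp (-(lam / th) *
      ∫ u in Set.Ioo (0:ℝ) 1, (1 - ∑' n : ℕ, g n * u ^ n) / (1 - u)) :=
  orderbook_stationary_rho_zero_general lam th hth g hg0 hgsum hI ρ hρnn hρsum hbal0 hbal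
end

section
/- Let λ > 0, μ > 0, θ > 0, let (g_n)_{n≥1} be nonnegative reals with Σ_{n≥1} g_n = 1, and let (π_n)_{n≥0} be a nonnegative summable sequence satisfying: 0 = −λπ_0 + (μ+θ)π_1, and for every n ≥ 1, 0 = −(λ+μ+nθ)π_n + (μ+(n+1)θ)π_{n+1} + λ Σ_{i=1}^{n} g_i π_{n−i}. Let Π(z) = Σ_{n=0}^∞ π_n z^n, G(z) = Σ_{n=1}^∞ g_n z^n and H(z) = (1−G(z))/(1−z). Then for every z ∈ (0,1), Π is differentiable at z and θ Π'(z) + (μ/z)(Π(z) − π_0) = λ H(z) Π(z). -/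
/-!
Multiply the `n`-th balance equation by `z ^ n` and sum over `n`. Summable coefficients are
bounded, so on the unit disc all series converge absolutely and `Π` may be differentiated
termwise. The cancellation terms sum to `θ (Π' - z Π')`, the market orders to
`μ ((Π - π₀) / z - Π)` and the limit orders to `λ (G - 1) Π`, the arrivals forming a Cauchy
product. Extended to `n = 0` in the same form, the balance equations leave only `-μ π₀`, and
dividing by `1 - z` gives the ODE.
-/

open Finset

section PowerSeries

variable {𝕜 : Type*} [RCLike 𝕜] {a : ℕ → 𝕜} {C : ℝ} {z : 𝕜}

theorem summable_norm_mul_pow_of_norm_le (ha : ∀ n, ‖a n‖ ≤ C) (hz : ‖z‖ < 1) :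
    Summable fun n => ‖a n * z ^ n‖ := by
  refine .of_nonneg_of_le (fun _ => norm_nonneg _) (fun n => ?_)
    ((summable_geometric_of_lt_one (norm_nonneg z) hz).mul_left C)
  rw [norm_mul, norm_pow]
  exact mul_le_mul_of_nonneg_right (ha n) (by positivity)

theorem summable_coe_mul_pow_sub_one {r : ℝ} (hr0 : 0 ≤ r) (hr : r < 1) :
    Summable fun n : ℕ => (n : ℝ) * r ^ (n - 1) := by
  rw [← summable_nat_add_iff 1]
  have hnorm : ‖r‖ < 1 := by rwa [Real.norm_of_nonneg hr0]
  refine ((summable_pow_mul_geometric_of_norm_lt_one 1 hnorm).add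
    (summable_geometric_of_lt_one hr0 hr)).congr fun n => ?_
  simp only [Nat.add_sub_cancel, Nat.cast_add, Nat.cast_one, pow_one]
  ring

theorem summable_coe_add_one_mul_mul_pow (ha : ∀ n, ‖a n‖ ≤ C) (hz : ‖z‖ < 1) :
    Summable fun n : ℕ => ((n : 𝕜) + 1) * a (n + 1) * z ^ n := by
  have hu := ((summable_nat_add_iff 1).mpr
    (summable_coe_mul_pow_sub_one (norm_nonneg z) hz)).mul_left C
  refine .of_norm_bounded hu fun n => ?_
  rw [norm_mul, norm_mul, norm_pow, ← Nat.cast_add_one, RCLike.norm_natCast, Nat.add_sub_cancel,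
    mul_comm (n + 1 : ℕ).cast, mul_assoc]
  gcongr
  exact ha _

theorem hasDerivAt_tsum_mul_pow (ha : ∀ n, ‖a n‖ ≤ C) (hz : ‖z‖ < 1) :
    HasDerivAt (fun w => ∑' n, a n * w ^ n) (∑' n : ℕ, ((n : 𝕜) + 1) * a (n + 1) * z ^ n) z := by
  obtain ⟨r, hzr, hr1⟩ := exists_between hz
  have hr0 : 0 ≤ r := (norm_nonneg z).trans hzr.le
  have hC : 0 ≤ C := (norm_nonneg _).trans (ha 0)
  have hbound : ∀ n, ∀ y ∈ Metric.ball (0 : 𝕜) r,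
      ‖a n * ((n : 𝕜) * y ^ (n - 1))‖ ≤ C * ((n : ℝ) * r ^ (n - 1)) := by
    intro n y hy
    rw [mem_ball_zero_iff] at hy
    rw [norm_mul, norm_mul, norm_pow, RCLike.norm_natCast]
    gcongr
    exact ha n
  have hu := (summable_coe_mul_pow_sub_one hr0 hr1).mul_left C
  have hzball : z ∈ Metric.ball (0 : 𝕜) r := mem_ball_zero_iff.mpr hzr
  have hderiv := hasDerivAt_tsum_of_isPreconnected hu Metric.isOpen_ball
    (convex_ball 0 r).isPreconnected (fun n y _ => (hasDerivAt_pow n y).const_mul (a n))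
    hbound hzball ((summable_norm_mul_pow_of_norm_le ha hz).of_norm) hzball
  refine hderiv.congr_deriv ?_
  rw [(Summable.of_norm_bounded hu fun n => hbound n z hzball).tsum_eq_zero_add]
  simp only [CharP.cast_eq_zero, zero_mul, mul_zero, zero_add, Nat.cast_add, Nat.cast_one,
    Nat.add_sub_cancel]
  congr 1 with n
  ring

end PowerSeries

theorem hasSum_sum_Icc_mul_mul_pow {R : Type*} [NormedCommRing R] [CompleteSpace R]
    {f g : ℕ → R} {z : R} (hf0 : f 0 = 0) (hf : Summable fun n => ‖f n * z ^ n‖)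
    (hg : Summable fun n => ‖g n * z ^ n‖) :
    HasSum (fun n => (∑ i ∈ Icc 1 n, f i * g (n - i)) * z ^ n)
      ((∑' n, f n * z ^ n) * ∑' n, g n * z ^ n) := by
  refine (hasSum_sum_range_mul_of_summable_norm hf hg).congr_fun fun n => ?_
  have hIcc : ∑ i ∈ Icc 1 n, f i * g (n - i) = ∑ i ∈ range (n + 1), f i * g (n - i) := by
    rw [range_eq_Ico, sum_eq_sum_Ico_succ_bot (by omega), hf0, zero_mul, zero_add, zero_add,
      Ico_add_one_right_eq_Icc]
  rw [hIcc, sum_mul]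
  refine sum_congr rfl fun i hi => ?_
  rw [← pow_mul_pow_sub z (Nat.lt_succ_iff.mp (mem_range.mp hi))]
  ring

section Type0

variable (lam mu th : ℝ) (g π : ℕ → ℝ)

/-- At `n = 0` this is not the boundary equation of the model: it differs from it by `-μ π₀`. -/
def type0Balance (n : ℕ) : ℝ :=
  -(lam + mu + (n : ℝ) * th) * π n + (mu + ((n : ℝ) + 1) * th) * π (n + 1) +
    lam * ∑ i ∈ Icc 1 n, g i * π (n - i)

theorem type0Balance_zero :
    type0Balance lam mu th g π 0 = (-lam * π 0 + (mu + th) * π 1) - mu * π 0 := by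
  simp only [type0Balance, Nat.cast_zero, Icc_eq_empty_of_lt zero_lt_one, sum_empty]
  ring

variable {lam mu th g π}

theorem hasSum_type0Balance_mul_pow {Cg Cπ : ℝ} (hg0 : g 0 = 0) (hg : ∀ n, ‖g n‖ ≤ Cg)
    (hπ : ∀ n, ‖π n‖ ≤ Cπ) {z : ℝ} (hz0 : z ≠ 0) (hz : ‖z‖ < 1) :
    HasSum (fun n => type0Balance lam mu th g π n * z ^ n)
      (-(lam + mu) * ∑' n, π n * z ^ n - th * z * ∑' n : ℕ, ((n : ℝ) + 1) * π (n + 1) * z ^ n +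
        mu * ((∑' n, π n * z ^ n) - π 0) / z + th * ∑' n : ℕ, ((n : ℝ) + 1) * π (n + 1) * z ^ n +
        lam * (∑' n, g n * z ^ n) * ∑' n, π n * z ^ n) := by
  set P := ∑' n, π n * z ^ n
  set D := ∑' n : ℕ, ((n : ℝ) + 1) * π (n + 1) * z ^ n
  have hP : HasSum (fun n => π n * z ^ n) P :=
    (summable_norm_mul_pow_of_norm_le hπ hz).of_norm.hasSum
  have hD : HasSum (fun n : ℕ => ((n : ℝ) + 1) * π (n + 1) * z ^ n) D :=
    (summable_coe_add_one_mul_mul_pow hπ hz).hasSum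
  have hzD : HasSum (fun n : ℕ => (n : ℝ) * π n * z ^ n) (z * D) := by
    rw [← hasSum_nat_add_iff' 1]
    simpa [pow_succ, mul_comm, mul_left_comm, mul_assoc] using hD.mul_left z
  have hshift : HasSum (fun n => π (n + 1) * z ^ n) ((P - π 0) / z) := by
    have := ((hasSum_nat_add_iff' 1).mpr hP).div_const z
    simp only [sum_range_one, pow_zero, mul_one] at this
    refine this.congr_fun fun n => ?_
    field_simp
    ring
  have hconv : HasSum (fun n => (∑ i ∈ Icc 1 n, g i * π (n - i)) * z ^ n)
      ((∑' n, g n * z ^ n) * P) :=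
    hasSum_sum_Icc_mul_mul_pow hg0 (summable_norm_mul_pow_of_norm_le hg hz)
      (summable_norm_mul_pow_of_norm_le hπ hz)
  rw [show -(lam + mu) * P - th * z * D + mu * (P - π 0) / z + th * D +
      lam * (∑' n, g n * z ^ n) * P = -(lam + mu) * P + -th * (z * D) + mu * ((P - π 0) / z) +
        th * D + lam * ((∑' n, g n * z ^ n) * P) by ring]
  refine ((((hP.mul_left _).add (hzD.mul_left _)).add (hshift.mul_left _)).add
    (hD.mul_left _)).add (hconv.mul_left _) |>.congr_fun fun n => ?_
  simp only [type0Balance]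
  ring

end Type0

theorem type0_generating_function_ode_general
    (lam mu th : ℝ)
    (g π : ℕ → ℝ) (hg0 : g 0 = 0) (hgsum : HasSum g 1)
    (hπsum : Summable π)
    (hbal0 : 0 = -lam * π 0 + (mu + th) * π 1)
    (hbal : ∀ n : ℕ, 1 ≤ n →
      0 = -(lam + mu + (n : ℝ) * th) * π n + (mu + ((n : ℝ) + 1) * th) * π (n + 1) +
        lam * ∑ i ∈ Finset.Icc 1 n, g i * π (n - i)) :
    ∀ z ∈ Set.Ioo (0 : ℝ) 1,
      DifferentiableAt ℝ (fun w : ℝ => ∑' n : ℕ, π n * w ^ n) z ∧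
        th * deriv (fun w : ℝ => ∑' n : ℕ, π n * w ^ n) z +
            (mu / z) * ((∑' n : ℕ, π n * z ^ n) - π 0) =
          lam * ((1 - ∑' n : ℕ, g n * z ^ n) / (1 - z)) *
            ∑' n : ℕ, π n * z ^ n := by
  rintro z ⟨hz0, hz1⟩
  have hz : ‖z‖ < 1 := by rwa [Real.norm_of_nonneg hz0.le]
  have hgC n : ‖g n‖ ≤ ∑' m, ‖g m‖ := hgsum.summable.norm.le_tsum n fun _ _ => norm_nonneg _
  have hπC n : ‖π n‖ ≤ ∑' m, ‖π m‖ := hπsum.norm.le_tsum n fun _ _ => norm_nonneg _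
  have hderiv := hasDerivAt_tsum_mul_pow hπC hz
  refine ⟨hderiv.differentiableAt, ?_⟩
  have hbalance : HasSum (fun n => type0Balance lam mu th g π n * z ^ n) (-(mu * π 0)) := by
    convert hasSum_single 0 fun n hn => ?_ using 1
    · rw [type0Balance_zero, ← hbal0]
      ring
    · simp only [type0Balance, ← hbal n (Nat.one_le_iff_ne_zero.mpr hn), zero_mul]
  have key := (hasSum_type0Balance_mul_pow hg0 hgC hπC hz0.ne' hz).unique hbalance
  rw [hderiv.deriv]
  have h1z : 1 - z ≠ 0 := (sub_pos.mpr hz1).ne'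
  field_simp at key ⊢
  linear_combination key

/-- In the Type-0 model of the best quote (limit orders at rate `λ`
with size distribution `(g_n)_{n≥1}`, unit-size market orders at rate `μ`, per-share
cancellation rate `θ`), a nonnegative summable solution `(π_n)` of the balance
equations has a generating function `Π(z) = Σ π_n z^n` which is differentiable on
`(0,1)` and satisfies `θΠ'(z) + (μ/z)(Π(z) - π_0) = λ H(z) Π(z)` with
`H(z) = (1-G(z))/(1-z)`. -/
theorem type0_generating_function_ode
    (lam mu th : ℝ) (hlam : 0 < lam) (hmu : 0 < mu) (hth : 0 < th)
    (g π : ℕ → ℝ) (hg0 : g 0 = 0) (hgnn : ∀ n, 0 ≤ g n) (hgsum : HasSum g 1)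
    (hπnn : ∀ n, 0 ≤ π n) (hπsum : Summable π)
    (hbal0 : 0 = -lam * π 0 + (mu + th) * π 1)
    (hbal : ∀ n : ℕ, 1 ≤ n →
      0 = -(lam + mu + (n : ℝ) * th) * π n + (mu + ((n : ℝ) + 1) * th) * π (n + 1) +
        lam * ∑ i ∈ Finset.Icc 1 n, g i * π (n - i)) :
    ∀ z ∈ Set.Ioo (0 : ℝ) 1,
      DifferentiableAt ℝ (fun w : ℝ => ∑' n : ℕ, π n * w ^ n) z ∧
        th * deriv (fun w : ℝ => ∑' n : ℕ, π n * w ^ n) z +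
            (mu / z) * ((∑' n : ℕ, π n * z ^ n) - π 0) =
          lam * ((1 - ∑' n : ℕ, g n * z ^ n) / (1 - z)) *
            ∑' n : ℕ, π n * z ^ n :=
  type0_generating_function_ode_general lam mu th g π hg0 hgsum hπsum hbal0 hbal
end
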